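/- arXiv:1110.2813 — 2 statements merged into one kernel-verified Lean document; each statement's English description precedes it below -/
import Mathlib

section
/- Let n ≥ 2 and let G and H be connected simple graphs on the vertex set Fin n. Suppose there exists a real constant c > 0 such that xᵀ L_G x = c · xᵀ L_H x for every vector x ∈ ℝⁿ with ∑ i, x i = 0. Then c = 1 and G = H. -/
/-!
`M = L_G - c • L_H` is symmetric and kills the all-ones vector, so its quadratic form is invariant
under adding constant vectors; vanishing on the sum-zero hyperplane, it vanishes everywhere, and
by polarization `M = 0`. Off the diagonal `L_G = c • L_H` reads `A_G = c • A_H`, and one edge of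
the connected graph `G` forces `c = 1`, whence `A_G = A_H` and `G = H`.
-/

open Matrix Finset

namespace Matrix

variable {ι R : Type*} [Fintype ι]

theorem IsSymm.dotProduct_mulVec_comm [CommSemiring R] {M : Matrix ι ι R} (hM : M.IsSymm)
    (x y : ι → R) : x ⬝ᵥ M *ᵥ y = y ⬝ᵥ M *ᵥ x := by
  simpa only [hM.eq] using dotProduct_transpose_mulVec M x y

theorem IsSymm.dotProduct_mulVec_add_smul_one [CommRing R] {M : Matrix ι ι R} (hM : M.IsSymm)
    (hM1 : M *ᵥ (fun _ ↦ 1) = 0) (x : ι → R) (t : R) :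
    (x + t • fun _ ↦ 1) ⬝ᵥ M *ᵥ (x + t • fun _ ↦ 1) = x ⬝ᵥ M *ᵥ x := by
  rw [mulVec_add, mulVec_smul, hM1, smul_zero, add_zero, add_dotProduct, smul_dotProduct,
    hM.dotProduct_mulVec_comm (fun _ ↦ 1) x, hM1, dotProduct_zero, smul_zero, add_zero]

theorem IsSymm.dotProduct_mulVec_self_eq_zero_of_sum_eq_zero [Field R] [CharZero R]
    {M : Matrix ι ι R} (hM : M.IsSymm) (hM1 : M *ᵥ (fun _ ↦ 1) = 0)
    (h : ∀ x : ι → R, ∑ i, x i = 0 → x ⬝ᵥ M *ᵥ x = 0) (x : ι → R) :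
    x ⬝ᵥ M *ᵥ x = 0 := by
  cases isEmpty_or_nonempty ι
  · simp [dotProduct]
  set t := (∑ i, x i) / Fintype.card ι
  set y : ι → R := x - t • fun _ ↦ 1
  have hy : ∑ i, y i = 0 := by
    simp only [y, Pi.sub_apply, Pi.smul_apply, smul_eq_mul, mul_one, sum_sub_distrib, sum_const,
      card_univ, nsmul_eq_mul, t]
    field_simp
    ring
  have hx := hM.dotProduct_mulVec_add_smul_one hM1 y t
  rw [sub_add_cancel] at hx
  exact hx ▸ h y hy

theorem IsSymm.eq_zero_of_dotProduct_mulVec_self_eq_zero [CommRing R] [NoZeroDivisors R]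
    [NeZero (2 : R)] [DecidableEq ι] {M : Matrix ι ι R} (hM : M.IsSymm)
    (h : ∀ x : ι → R, x ⬝ᵥ M *ᵥ x = 0) : M = 0 := by
  ext i j
  have hdiag (k : ι) : M k k = 0 := by simpa using h (Pi.single k 1)
  have hpol := h (Pi.single i 1 + Pi.single j 1)
  simp only [mulVec_add, dotProduct_add, add_dotProduct, mulVec_single, single_one_dotProduct,
    MulOpposite.op_one, one_smul, col_apply, hdiag, hM.apply i j, zero_add, add_zero,
    ← two_mul] at hpol
  exact (mul_eq_zero.mp hpol).resolve_left two_ne_zero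

end Matrix

namespace SimpleGraph

variable {V R : Type*} {G H : SimpleGraph V} [DecidableRel G.Adj] [DecidableRel H.Adj]

theorem lapMatrix_apply_of_ne [Fintype V] [DecidableEq V] [Ring R] {i j : V} (hij : i ≠ j) :
    G.lapMatrix R i j = -G.adjMatrix R i j := by
  simp [lapMatrix, degMatrix, hij]

theorem adjMatrix_eq_smul_of_lapMatrix_eq_smul [Fintype V] [DecidableEq V] [Ring R] {c : R}
    (h : G.lapMatrix R = c • H.lapMatrix R) : G.adjMatrix R = c • H.adjMatrix R := by
  ext i j
  obtain rfl | hij := eq_or_ne i j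
  · simp
  · simpa [lapMatrix_apply_of_ne hij] using congrFun₂ h i j

theorem eq_of_adjMatrix_eq [Zero R] [One R] [NeZero (1 : R)]
    (h : G.adjMatrix R = H.adjMatrix R) : G = H := by
  ext i j
  have hij := congrFun₂ h i j
  by_cases hG : G.Adj i j <;> by_cases hH : H.Adj i j <;> simp [hG, hH] at hij ⊢

theorem eq_one_and_eq_of_adjMatrix_eq_smul [Semiring R] [Nontrivial R] {c : R} (hG : G ≠ ⊥)
    (h : G.adjMatrix R = c • H.adjMatrix R) : c = 1 ∧ G = H := by
  obtain ⟨i, j, hij⟩ := ne_bot_iff_exists_adj.mp hG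
  have hc : c = 1 := by
    by_cases hH : H.Adj i j <;> simpa [hij, hH] using (congrFun₂ h i j).symm
  exact ⟨hc, eq_of_adjMatrix_eq (R := R) (by rwa [hc, one_smul] at h)⟩

end SimpleGraph

theorem eq_of_lap_quadForm_proportional_general
    {n : ℕ} (hn : 2 ≤ n) (G H : SimpleGraph (Fin n))
    [DecidableRel G.Adj] [DecidableRel H.Adj]
    (hG : G.Connected)
    (c : ℝ)
    (h : ∀ x : Fin n → ℝ, ∑ i, x i = 0 →
      x ⬝ᵥ (G.lapMatrix ℝ) *ᵥ x = c * (x ⬝ᵥ (H.lapMatrix ℝ) *ᵥ x)) :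
    c = 1 ∧ G = H := by
  set M := G.lapMatrix ℝ - c • H.lapMatrix ℝ
  have hM : M.IsSymm := (G.isSymm_lapMatrix (R := ℝ)).sub ((H.isSymm_lapMatrix (R := ℝ)).smul c)
  have hM1 : M *ᵥ (fun _ ↦ 1) = 0 := by
    simp [M, sub_mulVec, smul_mulVec, SimpleGraph.lapMatrix_mulVec_const_eq_zero]
  have hMx : ∀ x : Fin n → ℝ, ∑ i, x i = 0 → x ⬝ᵥ M *ᵥ x = 0 := fun x hx ↦ by
    simp [M, sub_mulVec, smul_mulVec, h x hx]
  have hGH : G.lapMatrix ℝ = c • H.lapMatrix ℝ := sub_eq_zero.mp <|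
    hM.eq_zero_of_dotProduct_mulVec_self_eq_zero
      (hM.dotProduct_mulVec_self_eq_zero_of_sum_eq_zero hM1 hMx)
  have : Nontrivial (Fin n) := Fin.nontrivial_iff_two_le.mpr hn
  have hG_ne_bot : G ≠ ⊥ := SimpleGraph.ne_bot_iff_exists_adj.mpr
    ⟨_, hG.preconnected.exists_adj_of_nontrivial ⟨0, by omega⟩⟩
  exact SimpleGraph.eq_one_and_eq_of_adjMatrix_eq_smul hG_ne_bot
    (SimpleGraph.adjMatrix_eq_smul_of_lapMatrix_eq_smul hGH)

/-- Let `n ≥ 2` and let `G`, `H` be connected simple graphs on `Fin n`. If there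
is a constant `c > 0` such that `xᵀ L_G x = c · xᵀ L_H x` for every vector `x ∈ ℝⁿ` with
`∑ i, x i = 0`, then `c = 1` and `G = H`. -/
theorem eq_of_lap_quadForm_proportional
    {n : ℕ} (hn : 2 ≤ n) (G H : SimpleGraph (Fin n))
    [DecidableRel G.Adj] [DecidableRel H.Adj]
    (hG : G.Connected) (hH : H.Connected)
    (c : ℝ) (hc : 0 < c)
    (h : ∀ x : Fin n → ℝ, ∑ i, x i = 0 →
      x ⬝ᵥ (G.lapMatrix ℝ) *ᵥ x = c * (x ⬝ᵥ (H.lapMatrix ℝ) *ᵥ x)) :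
    c = 1 ∧ G = H :=
  eq_of_lap_quadForm_proportional_general hn G H hG c h
end

section
/- Let n ≥ 2 and let G and H be connected simple graphs on the vertex set Fin n. Then κ(L_G, L_H) = 1 if and only if G = H, where κ(L_G, L_H) = sSup R(G,H) · sSup R(H,G) and R(G,H) = {(xᵀL_Gx)/(xᵀL_Hx) : x ∈ ℝⁿ, x ≠ 0, ∑ i, x i = 0}. -/
/-!
If `κ = 1`, write `S = sup R(G,H)` and `T = sup R(H,G)`, so `ST = 1`. For every nonzero `x ⟂ 𝟙`
we have `xᵀL_Gx ≤ S·xᵀL_Hx ≤ ST·xᵀL_Gx = xᵀL_Gx`, so the quadratic form of the symmetric matrix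
`M = L_G - S·L_H` vanishes on `𝟙^⊥`. Since `M𝟙 = 0`, its form is invariant under adding constants,
hence vanishes everywhere, and polarization gives `L_G = S·L_H`. Comparing the off-diagonal
entries at an edge of `G` forces `S = 1`, and then the adjacency relations agree.
Conversely `R(G,G) = {1}` because `xᵀL_Gx > 0` for nonzero `x ⟂ 𝟙` when `G` is connected.
-/

open Matrix Finset

/-- The real Laplacian matrix of a simple graph on `Fin n` (Mathlib's
`SimpleGraph.lapMatrix` with real entries, using classical decidability of adjacency). -/
noncomputable def lapR {n : ℕ} (G : SimpleGraph (Fin n)) : Matrix (Fin n) (Fin n) ℝ :=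
  letI := Classical.decRel G.Adj
  G.lapMatrix ℝ

/-- The Rayleigh ratio set
`R(G,H) = {(xᵀ L_G x)/(xᵀ L_H x) : x ∈ ℝⁿ, x ≠ 0, ∑ i, x i = 0}`. -/
def raySet {n : ℕ} (G H : SimpleGraph (Fin n)) : Set ℝ :=
  {r | ∃ x : Fin n → ℝ, x ≠ 0 ∧ ∑ i, x i = 0 ∧
    r = (x ⬝ᵥ (lapR G) *ᵥ x) / (x ⬝ᵥ (lapR H) *ᵥ x)}

namespace Matrix

variable {ι R : Type*} [Fintype ι]

lemma IsSymm.dotProduct_mulVec_add [CommRing R] {M : Matrix ι ι R} (hM : M.IsSymm)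
    (x y : ι → R) :
    (x + y) ⬝ᵥ M *ᵥ (x + y) = x ⬝ᵥ M *ᵥ x + 2 * (x ⬝ᵥ M *ᵥ y) + y ⬝ᵥ M *ᵥ y := by
  have hyx : y ⬝ᵥ M *ᵥ x = x ⬝ᵥ M *ᵥ y := by
    rw [dotProduct_mulVec, ← mulVec_transpose, hM.eq, dotProduct_comm]
  rw [mulVec_add, dotProduct_add, add_dotProduct, add_dotProduct, hyx]
  ring

lemma IsSymm.eq_zero_of_forall_dotProduct_mulVec_self [Field R] [CharZero R]
    [DecidableEq ι] {M : Matrix ι ι R} (hM : M.IsSymm) (h : ∀ x, x ⬝ᵥ M *ᵥ x = 0) :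
    M = 0 := by
  have hdiag (i : ι) : M i i = 0 := by
    simpa [mulVec_single_one, single_dotProduct] using h (Pi.single i 1)
  ext i j
  have := hM.dotProduct_mulVec_add (Pi.single i 1) (Pi.single j 1)
  simp only [h, mulVec_single_one, single_dotProduct, col_apply, one_mul, hdiag] at this
  simpa using this

lemma IsSymm.dotProduct_mulVec_add_const [CommRing R] {M : Matrix ι ι R} (hM : M.IsSymm)
    (hM1 : M *ᵥ (fun _ ↦ 1) = 0) (x : ι → R) (c : R) :
    (x + fun _ ↦ c) ⬝ᵥ M *ᵥ (x + fun _ ↦ c) = x ⬝ᵥ M *ᵥ x := by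
  have hMc : M *ᵥ (fun _ ↦ c) = 0 := by
    rw [show (fun _ ↦ c : ι → R) = c • fun _ ↦ 1 by ext; simp, mulVec_smul, hM1, smul_zero]
  rw [hM.dotProduct_mulVec_add, hMc]
  simp

lemma IsSymm.eq_zero_of_forall_sum_eq_zero_dotProduct_mulVec_self [Field R] [CharZero R]
    [DecidableEq ι] {M : Matrix ι ι R} (hM : M.IsSymm) (hM1 : M *ᵥ (fun _ ↦ 1) = 0)
    (h : ∀ x, ∑ i, x i = 0 → x ⬝ᵥ M *ᵥ x = 0) : M = 0 := by
  refine hM.eq_zero_of_forall_dotProduct_mulVec_self fun x ↦ ?_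
  set c : R := (∑ i, x i) / Fintype.card ι
  have hmean : ∑ i, (x i - c) = 0 := by
    rcases isEmpty_or_nonempty ι with hι | hι
    · simp
    · simp [Finset.sum_sub_distrib, c, mul_div_cancel₀]
  rw [← sub_add_cancel x fun _ ↦ c, hM.dotProduct_mulVec_add_const hM1]
  exact h _ hmean

end Matrix

lemma exists_ne_zero_sum_eq_zero {ι R : Type*} [Fintype ι] [DecidableEq ι]
    [Nontrivial ι] [AddCommGroup R] [Nontrivial R] :
    ∃ x : ι → R, x ≠ 0 ∧ ∑ i, x i = 0 := by
  obtain ⟨i, j, hij⟩ := exists_pair_ne ι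
  obtain ⟨a, ha⟩ := exists_ne (0 : R)
  refine ⟨Pi.single i a - Pi.single j a, fun h ↦ ha ?_, by simp⟩
  simpa [hij] using congrFun h i

section Laplacian

variable {n : ℕ}

lemma isSymm_lapR (G : SimpleGraph (Fin n)) : (lapR G).IsSymm := by
  classical exact SimpleGraph.isSymm_lapMatrix ..

lemma lapR_mulVec_const (G : SimpleGraph (Fin n)) : lapR G *ᵥ (fun _ ↦ 1) = 0 := by
  classical exact SimpleGraph.lapMatrix_mulVec_const_eq_zero ..

open scoped Classical in
lemma lapR_apply_of_ne (G : SimpleGraph (Fin n)) {i j : Fin n} (hij : i ≠ j) :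
    lapR G i j = if G.Adj i j then -1 else 0 := by
  simp [lapR, SimpleGraph.lapMatrix, SimpleGraph.degMatrix, hij, apply_ite]

lemma dotProduct_lapR_mulVec_pos {G : SimpleGraph (Fin n)} (hG : G.Connected)
    {x : Fin n → ℝ} (hx : x ≠ 0) (hs : ∑ i, x i = 0) : 0 < x ⬝ᵥ lapR G *ᵥ x := by
  classical
  refine ((SimpleGraph.posSemidef_lapMatrix ℝ G).dotProduct_mulVec_nonneg x).lt_of_ne' fun h ↦ ?_
  rw [← star_trivial x, ← toLinearMap₂'_apply', star_trivial,
    SimpleGraph.lapMatrix_toLinearMap₂'_apply'_eq_zero_iff_forall_reachable] at h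
  obtain ⟨i₀⟩ := hG.nonempty
  have hconst : x = fun _ ↦ x i₀ := funext fun i ↦ h i i₀ (hG i i₀)
  rw [hconst] at hs hx
  simp only [sum_const, card_univ, Fintype.card_fin, nsmul_eq_mul, mul_eq_zero,
    Nat.cast_eq_zero] at hs
  obtain hn | h₀ := hs
  · exact i₀.pos.ne' hn
  · exact hx (funext fun _ ↦ h₀)

end Laplacian

section Rayleigh

variable {n : ℕ} {G H : SimpleGraph (Fin n)}

lemma raySet_self (hn : 2 ≤ n) (hG : G.Connected) : raySet G G = {1} := by
  have : Nontrivial (Fin n) := Fin.nontrivial_iff_two_le.mpr hn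
  obtain ⟨x₀, hx₀, hs₀⟩ := exists_ne_zero_sum_eq_zero (ι := Fin n) (R := ℝ)
  refine Set.eq_singleton_iff_unique_mem.mpr ⟨⟨x₀, hx₀, hs₀, ?_⟩, ?_⟩
  · rw [div_self (dotProduct_lapR_mulVec_pos hG hx₀ hs₀).ne']
  · rintro _ ⟨x, hx, hs, rfl⟩
    exact div_self (dotProduct_lapR_mulVec_pos hG hx hs).ne'

lemma dotProduct_lapR_mulVec_le_sSup_raySet_mul (hH : H.Connected) (hb : BddAbove (raySet G H))
    {x : Fin n → ℝ} (hx : x ≠ 0) (hs : ∑ i, x i = 0) :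
    x ⬝ᵥ lapR G *ᵥ x ≤ sSup (raySet G H) * (x ⬝ᵥ lapR H *ᵥ x) :=
  (div_le_iff₀ (dotProduct_lapR_mulVec_pos hH hx hs)).mp (le_csSup hb ⟨x, hx, hs, rfl⟩)

lemma lapR_eq_smul_of_sSup_raySet_mul_sSup_raySet_eq_one (hG : G.Connected) (hH : H.Connected)
    (h : sSup (raySet G H) * sSup (raySet H G) = 1) :
    lapR G = sSup (raySet G H) • lapR H := by
  set S := sSup (raySet G H)
  set T := sSup (raySet H G)
  have hbdd : BddAbove (raySet G H) ∧ BddAbove (raySet H G) := by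
    constructor <;> by_contra hb <;> simp [Real.sSup_of_not_bddAbove hb, S, T] at h
  rw [← sub_eq_zero]
  refine ((isSymm_lapR G).sub ((isSymm_lapR H).smul S))
    |>.eq_zero_of_forall_sum_eq_zero_dotProduct_mulVec_self ?_ fun x hs ↦ ?_
  · simp [sub_mulVec, smul_mulVec, lapR_mulVec_const]
  rcases eq_or_ne x 0 with rfl | hx
  · simp
  rw [sub_mulVec, smul_mulVec, dotProduct_sub, dotProduct_smul, smul_eq_mul, sub_eq_zero]
  have hGH : x ⬝ᵥ lapR G *ᵥ x ≤ S * (x ⬝ᵥ lapR H *ᵥ x) :=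
    dotProduct_lapR_mulVec_le_sSup_raySet_mul hH hbdd.1 hx hs
  have hHG : x ⬝ᵥ lapR H *ᵥ x ≤ T * (x ⬝ᵥ lapR G *ᵥ x) :=
    dotProduct_lapR_mulVec_le_sSup_raySet_mul hG hbdd.2 hx hs
  have hS : 0 < S := (pos_iff_pos_of_mul_pos ((dotProduct_lapR_mulVec_pos hG hx hs).trans_le
    hGH)).mpr (dotProduct_lapR_mulVec_pos hH hx hs)
  refine hGH.antisymm ?_
  calc S * (x ⬝ᵥ lapR H *ᵥ x) ≤ S * (T * (x ⬝ᵥ lapR G *ᵥ x)) := by gcongr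
    _ = x ⬝ᵥ lapR G *ᵥ x := by rw [← mul_assoc, h, one_mul]

end Rayleigh

lemma eq_of_lapR_eq_smul {n : ℕ} {G H : SimpleGraph (Fin n)} {c : ℝ} {i j : Fin n}
    (hij : G.Adj i j) (h : lapR G = c • lapR H) : G = H := by
  classical
  have hentry {a b : Fin n} (hab : a ≠ b) :
      (if G.Adj a b then -1 else 0 : ℝ) = c * if H.Adj a b then -1 else 0 := by
    simpa [lapR_apply_of_ne _ hab] using congr($h a b)
  have hc : c = 1 := by
    have := hentry hij.ne
    by_cases hH : H.Adj i j <;> simp [hij, hH] at this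
    linarith
  subst hc
  ext a b
  rcases eq_or_ne a b with rfl | hab
  · simp
  have := hentry hab
  by_cases G.Adj a b <;> by_cases H.Adj a b <;> simp_all

/-- Let `n ≥ 2` and let `G`, `H` be connected simple graphs on `Fin n`. Then the
generalized condition number `κ(L_G, L_H) = sSup R(G,H) · sSup R(H,G)` equals `1` iff
`G = H`. -/
theorem condNumber_eq_one_iff_eq
    {n : ℕ} (hn : 2 ≤ n) (G H : SimpleGraph (Fin n))
    (hG : G.Connected) (hH : H.Connected) :
    sSup (raySet G H) * sSup (raySet H G) = 1 ↔ G = H := by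
  have : Nontrivial (Fin n) := Fin.nontrivial_iff_two_le.mpr hn
  constructor
  · intro h
    obtain ⟨j, hij⟩ := hG.preconnected.exists_adj_of_nontrivial hG.nonempty.some
    exact eq_of_lapR_eq_smul hij (lapR_eq_smul_of_sSup_raySet_mul_sSup_raySet_eq_one hG hH h)
  · rintro rfl
    simp [raySet_self hn hG]
end
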